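/- Under randomization, monotonicity, principal ignorability, and the positivity condition, for every z ∈ {1,...,J} and every g ∈ {J−z+1,...,J}: π_z·E[Y_z·1(G=g)] = E[((p_{J−g+1}(X) − p_{J−g}(X))/p_z(X))·Y·S·1(Z=z)]. Consequently, if P(G=g) > 0, the survivor average causal mean E[Y_z | G=g] equals E[((p_{J−g+1}(X) − p_{J−g}(X))/p_z(X))·Y·S·1(Z=z)]/(π_z·P(G=g)). -/

import Mathlib

open MeasureTheory ProbabilityTheory

noncomputable section

namespace TruncationByDeath

variable {Ω : Type*} {𝒳 : Type*} [MeasurableSpace Ω] [MeasurableSpace 𝒳]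

/-- The σ-algebra on `Ω` generated by the covariate map `X`. -/
def mX (X : Ω → 𝒳) : MeasurableSpace Ω := MeasurableSpace.comap X inferInstance

/-- Real-valued indicator of the event `{Z = z}`. -/
def indic (Z : Ω → ℕ) (z : ℕ) : Ω → ℝ := fun ω => if Z ω = z then 1 else 0

/-- Observed survival status `S := ∑_z 1(Z=z) ⬝ S_z`. -/
def Sobs (J : ℕ) (Z : Ω → ℕ) (S : ℕ → Ω → ℝ) : Ω → ℝ :=
  fun ω => ∑ z ∈ Finset.Icc 1 J, indic Z z ω * S z ω

/-- Observed outcome `Y := ∑_z 1(Z=z) ⬝ Y_z`. -/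
def Yobs (J : ℕ) (Z : Ω → ℕ) (Y : ℕ → Ω → ℝ) : Ω → ℝ :=
  fun ω => ∑ z ∈ Finset.Icc 1 J, indic Z z ω * Y z ω

/-- Principal score `p_z(X) := E[S_z | σ(X)]`, with conventions `p_0 := 0` and `p_{J+1} := 1`. -/
def pscore (P : Measure Ω) (X : Ω → 𝒳) (S : ℕ → Ω → ℝ) (J : ℕ) (z : ℕ) : Ω → ℝ :=
  if z = 0 then fun _ => 0 else if z = J + 1 then fun _ => 1 else P[S z | mX X]

/-- Treatment probability `π_z := P(Z = z)`. -/
def piZ (P : Measure Ω) (Z : Ω → ℕ) (z : ℕ) : ℝ := (P {ω | Z ω = z}).toReal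

/-- Principal stratum variable `G := ∑_{z=1}^J S_z`. -/
def Gsum (J : ℕ) (S : ℕ → Ω → ℝ) : Ω → ℝ := fun ω => ∑ z ∈ Finset.Icc 1 J, S z ω

/-- Real-valued indicator of the event `{G = g}`. -/
def indG (J : ℕ) (S : ℕ → Ω → ℝ) (g : ℕ) : Ω → ℝ :=
  Set.indicator {ω | Gsum J S ω = (g : ℝ)} (fun _ => (1 : ℝ))

/-- Principal score of the stratum `g` : `e_g(X) := E[1(G=g) | σ(X)]`. -/
def eg (P : Measure Ω) (X : Ω → 𝒳) (J : ℕ) (S : ℕ → Ω → ℝ) (g : ℕ) : Ω → ℝ :=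
  P[indG J S g | mX X]

/-- Basic setup: measurability, ranges, values and integrability of the primitives. -/
structure Setup (P : Measure Ω) (J : ℕ) (X : Ω → 𝒳) (Z : Ω → ℕ)
    (S Y : ℕ → Ω → ℝ) : Prop where
  hJ : 2 ≤ J
  hX : Measurable X
  hZ : Measurable Z
  hZr : ∀ ω, Z ω ∈ Finset.Icc 1 J
  hSm : ∀ z, Measurable (S z)
  hS01 : ∀ z ω, S z ω = 0 ∨ S z ω = 1
  hYm : ∀ z, Measurable (Y z)
  hYint : ∀ z, Integrable (Y z) P

/-- Randomization : `Z` is independent of `(X, S_1,…,S_J, Y_1,…,Y_J)` and `π_z > 0` for all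
`z ∈ {1,…,J}`. -/
def Randomization (P : Measure Ω) (J : ℕ) (X : Ω → 𝒳) (Z : Ω → ℕ)
    (S Y : ℕ → Ω → ℝ) : Prop :=
  IndepFun Z (fun ω => (X ω, fun z => S z ω, fun z => Y z ω)) P ∧
    ∀ z ∈ Finset.Icc 1 J, 0 < piZ P Z z

/-- Monotonicity : `S_{z'} ≤ S_z` a.s. whenever `z' ≤ z`. -/
def Monotonicity (P : Measure Ω) (J : ℕ) (S : ℕ → Ω → ℝ) : Prop :=
  ∀ z ∈ Finset.Icc 1 J, ∀ z' ∈ Finset.Icc 1 J, z' ≤ z → ∀ᵐ ω ∂P, S z' ω ≤ S z ω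

/-- Principal ignorability. -/
def PrincipalIgnorability (P : Measure Ω) (J : ℕ) (X : Ω → 𝒳)
    (S Y : ℕ → Ω → ℝ) : Prop :=
  ∀ z ∈ Finset.Icc 1 J, ∀ g ∈ Finset.Icc (J - z + 1) J, ∀ g' ∈ Finset.Icc (J - z + 1) J,
    (fun ω => (P[fun ω' => Y z ω' * indG J S g ω' | mX X]) ω * eg P X J S g' ω)
      =ᵐ[P] fun ω => (P[fun ω' => Y z ω' * indG J S g' ω' | mX X]) ω * eg P X J S g ω

/-- Positivity : the principal scores are uniformly bounded away from zero. -/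
def Positivity (P : Measure Ω) (J : ℕ) (X : Ω → 𝒳) (S : ℕ → Ω → ℝ) : Prop :=
  ∃ c : ℝ, 0 < c ∧ ∀ z ∈ Finset.Icc 1 J, ∀ᵐ ω ∂P, c ≤ pscore P X S J z ω

/-!
Under monotonicity the principal strata are nested: a unit in stratum `G = n` survives exactly
under the treatments `k ≥ J + 1 - n`. Hence `1(G = g) = S_{J-g+1} - S_{J-g}` (with `S_0 = 0`) and
`S_z = ∑_{g ≥ J-z+1} 1(G = g)`, so that conditionally on `X` we get `e_g = p_{J-g+1} - p_{J-g}`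
and `p_z = ∑_{g'} e_{g'}`, as well as `E[Y_z S_z | X] = ∑_{g'} E[Y_z 1(G = g') | X]`. With
principal ignorability this gives `e_g E[Y_z S_z | X] = p_z E[Y_z 1(G = g) | X]`, so by the tower
property `(e_g / p_z) Y_z S_z` has mean `E[Y_z 1(G = g)]`. Finally `1(Z = z)` is independent of
this weighted quantity and has mean `π_z`, while `Y S = Y_z S_z` on `{Z = z}`.
-/

theorem exists_sum_eq_and_eq_ite_of_monotoneOn {J : ℕ} {s : ℕ → ℝ}
    (h01 : ∀ k, s k = 0 ∨ s k = 1) (hmono : MonotoneOn s (Finset.Icc 1 J)) :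
    ∃ n ≤ J, ∑ k ∈ Finset.Icc 1 J, s k = n ∧
      ∀ k ∈ Finset.Icc 1 J, s k = if J + 1 ≤ n + k then 1 else 0 := by
  classical
  set T := {k ∈ Finset.Icc 1 J | s k = 1}
  refine ⟨T.card, (Finset.card_filter_le _ _).trans (by simp), ?_, fun k hk => ?_⟩
  · have hs : ∀ k ∈ Finset.Icc 1 J, s k = if s k = 1 then 1 else 0 := fun k _ => by
      rcases h01 k with h | h <;> simp [h]
    rw [Finset.sum_congr rfl hs, Finset.sum_boole]
  have hkI : k ∈ (Finset.Icc 1 J : Set ℕ) := hk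
  rw [Finset.mem_Icc] at hk
  rcases h01 k with h0 | h1
  · have hT : T ⊆ Finset.Icc (k + 1) J := fun k' hk'T => by
      obtain ⟨hk'J, hk'1⟩ := Finset.mem_filter.mp hk'T
      have hlt : ¬k' ≤ k := fun hle => by
        have := hmono (Finset.mem_coe.mpr hk'J) hkI hle
        linarith
      rw [Finset.mem_Icc] at hk'J ⊢
      omega
    have := Finset.card_le_card hT
    rw [Nat.card_Icc] at this
    rw [h0, if_neg (by omega)]
  · have hT : Finset.Icc k J ⊆ T := fun k' hk' => by
      rw [Finset.mem_Icc] at hk'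
      have hk'J : k' ∈ Finset.Icc 1 J := Finset.mem_Icc.mpr ⟨hk.1.trans hk'.1, hk'.2⟩
      have := hmono hkI (Finset.mem_coe.mpr hk'J) hk'.1
      exact Finset.mem_filter.mpr ⟨hk'J, (h01 k').resolve_left (by linarith)⟩
    have := Finset.card_le_card hT
    rw [Nat.card_Icc] at this
    rw [h1, if_pos (by omega)]

section Strata

-- `s` is the survival profile of a unit in stratum `n`, extended by `s 0 = 0`.
variable {J n : ℕ} {s : ℕ → ℝ}

theorem eq_sum_ite_of_eq_ite (hs : ∀ k ≤ J, s k = if J + 1 ≤ n + k then 1 else 0) (hn : n ≤ J)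
    {z : ℕ} (hz : z ∈ Finset.Icc 1 J) :
    s z = ∑ g ∈ Finset.Icc (J - z + 1) J, if n = g then 1 else 0 := by
  rw [Finset.mem_Icc] at hz
  rw [Finset.sum_ite_eq, hs z hz.2]
  simp only [Finset.mem_Icc]
  split_ifs <;> first | rfl | omega

theorem ite_eq_sub_of_eq_ite (hs : ∀ k ≤ J, s k = if J + 1 ≤ n + k then 1 else 0)
    {g : ℕ} (hg : g ∈ Finset.Icc 1 J) :
    (if n = g then 1 else 0) = s (J - g + 1) - s (J - g) := by
  rw [Finset.mem_Icc] at hg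
  rw [hs _ (by omega), hs _ (by omega)]
  split_ifs <;> first | omega | norm_num

end Strata

theorem indG_apply_of_gsum_eq {α : Type*} {J : ℕ} {S : ℕ → α → ℝ} {x : α} {n : ℕ}
    (hn : Gsum J S x = n) (g : ℕ) : indG J S g x = if n = g then 1 else 0 := by
  simp only [indG, Set.indicator_apply, Set.mem_ofPred_eq, hn, Nat.cast_inj]

theorem indG_zero_or_one {α : Type*} {J : ℕ} {S : ℕ → α → ℝ} (g : ℕ) (x : α) :
    indG J S g x = 0 ∨ indG J S g x = 1 := by
  by_cases h : Gsum J S x = g <;> simp [indG, h]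

section PrincipalStrata

variable {P : Measure Ω} {J : ℕ} {X : Ω → 𝒳} {Z : Ω → ℕ} {S Y : ℕ → Ω → ℝ}

theorem measurable_indG (hSm : ∀ k, Measurable (S k)) (g : ℕ) : Measurable (indG J S g) :=
  measurable_const.indicator
    (measurableSet_eq_fun (Finset.measurable_sum _ fun k _ => hSm k) measurable_const)

theorem Monotonicity.ae_monotoneOn (hmono : Monotonicity P J S) :
    ∀ᵐ ω ∂P, MonotoneOn (fun k => S k ω) (Finset.Icc 1 J) := by
  have h : ∀ᵐ ω ∂P, ∀ k ∈ Finset.Icc 1 J, ∀ k' ∈ Finset.Icc 1 J, k' ≤ k → S k' ω ≤ S k ω :=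
    (Filter.eventually_all_finset _).2 fun k hk => (Filter.eventually_all_finset _).2
      fun k' hk' => Filter.eventually_imp_distrib_left.2 (hmono k hk k' hk')
  filter_upwards [h] with ω hω a ha b hb hab using hω b hb a ha hab

-- `Function.update S 0 0` implements the convention `S_0 = 0`; `S 0` itself is arbitrary.
theorem ae_exists_gsum_eq_and_survival_eq_ite (hS01 : ∀ k ω, S k ω = 0 ∨ S k ω = 1)
    (hmono : Monotonicity P J S) :
    ∀ᵐ ω ∂P, ∃ n ≤ J, Gsum J S ω = n ∧
      ∀ k ≤ J, Function.update S 0 0 k ω = if J + 1 ≤ n + k then 1 else 0 := by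
  filter_upwards [hmono.ae_monotoneOn] with ω hω
  obtain ⟨n, hnJ, hsum, hs⟩ :=
    exists_sum_eq_and_eq_ite_of_monotoneOn (fun k => hS01 k ω) hω
  refine ⟨n, hnJ, hsum, fun k hk => ?_⟩
  rcases Nat.eq_zero_or_pos k with rfl | hk0
  · rw [Function.update_self, if_neg (by omega)]
    rfl
  · rw [Function.update_of_ne hk0.ne', hs k (Finset.mem_Icc.mpr ⟨hk0, hk⟩)]

theorem survival_ae_eq_sum_indG (hS01 : ∀ k ω, S k ω = 0 ∨ S k ω = 1)
    (hmono : Monotonicity P J S) {z : ℕ} (hz : z ∈ Finset.Icc 1 J) :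
    S z =ᵐ[P] ∑ g ∈ Finset.Icc (J - z + 1) J, indG J S g := by
  filter_upwards [ae_exists_gsum_eq_and_survival_eq_ite hS01 hmono] with ω ⟨n, hnJ, hG, hs⟩
  have hz0 : z ≠ 0 := by rw [Finset.mem_Icc] at hz; omega
  rw [← Function.update_of_ne hz0 0 S,
    eq_sum_ite_of_eq_ite (s := fun k => Function.update S 0 0 k ω) hs hnJ hz, Finset.sum_apply]
  simp only [indG_apply_of_gsum_eq hG]

theorem indG_ae_eq_sub (hS01 : ∀ k ω, S k ω = 0 ∨ S k ω = 1) (hmono : Monotonicity P J S)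
    {g : ℕ} (hg : g ∈ Finset.Icc 1 J) :
    indG J S g =ᵐ[P] Function.update S 0 0 (J - g + 1) - Function.update S 0 0 (J - g) := by
  filter_upwards [ae_exists_gsum_eq_and_survival_eq_ite hS01 hmono] with ω ⟨n, _, hG, hs⟩
  rw [indG_apply_of_gsum_eq hG,
    ite_eq_sub_of_eq_ite (s := fun k => Function.update S 0 0 k ω) hs hg]
  rfl

end PrincipalStrata

section ConditionalExpectation

variable {α : Type*} {m m₀ : MeasurableSpace α} {μ : Measure α}

theorem integrable_of_zero_or_one [IsFiniteMeasure μ] {f : α → ℝ} (hf : Measurable f)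
    (h01 : ∀ x, f x = 0 ∨ f x = 1) : Integrable f μ :=
  .of_bound hf.aestronglyMeasurable 1 <| .of_forall fun x => by
    rcases h01 x with h | h <;> simp [h]

theorem integrable_mul_of_zero_or_one {f b : α → ℝ} (hf : Integrable f μ) (hb : Measurable b)
    (h01 : ∀ x, b x = 0 ∨ b x = 1) : Integrable (fun x => f x * b x) μ :=
  hf.mul_bdd (c := 1) hb.aestronglyMeasurable <| .of_forall fun x => by
    rcases h01 x with h | h <;> simp [h]

theorem condExp_mem_Icc_of_zero_or_one [IsFiniteMeasure μ] (hm : m ≤ m₀) {f : α → ℝ}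
    (hf : Measurable f) (h01 : ∀ x, f x = 0 ∨ f x = 1) : ∀ᵐ x ∂μ, μ[f | m] x ∈ Set.Icc 0 1 := by
  have hf01 : ∀ x, 0 ≤ f x ∧ f x ≤ 1 := fun x => by rcases h01 x with h | h <;> simp [h]
  have hle : μ[f | m] ≤ᵐ[μ] μ[fun _ => (1 : ℝ) | m] :=
    condExp_mono (integrable_of_zero_or_one hf h01) (integrable_const 1)
      (.of_forall fun x => (hf01 x).2)
  rw [condExp_const hm] at hle
  filter_upwards [condExp_nonneg (.of_forall fun x => (hf01 x).1), hle] with x h0 h1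
  exact ⟨h0, h1⟩

theorem condExp_ae_eq_sum_of_ae_eq_sum {ι : Type*} {s : Finset ι} {f : α → ℝ} {g : ι → α → ℝ}
    (hg : ∀ i ∈ s, Integrable (g i) μ) (hfg : f =ᵐ[μ] ∑ i ∈ s, g i) :
    μ[f | m] =ᵐ[μ] ∑ i ∈ s, μ[g i | m] :=
  (condExp_congr_ae hfg).trans (condExp_finsetSum hg m)

theorem integral_mul_eq_of_mul_condExp_ae_eq [IsFiniteMeasure μ] (hm : m ≤ m₀) {w f h : α → ℝ}
    (hw : StronglyMeasurable[m] w) (hwf : Integrable (fun x => w x * f x) μ)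
    (hf : Integrable f μ) (hwh : w * μ[f | m] =ᵐ[μ] μ[h | m]) :
    ∫ x, w x * f x ∂μ = ∫ x, h x ∂μ :=
  calc ∫ x, w x * f x ∂μ = ∫ x, μ[w * f | m] x ∂μ := (integral_condExp hm).symm
    _ = ∫ x, (w * μ[f | m]) x ∂μ :=
      integral_congr_ae (condExp_mul_of_stronglyMeasurable_left hw hwf hf)
    _ = ∫ x, μ[h | m] x ∂μ := integral_congr_ae hwh
    _ = ∫ x, h x ∂μ := integral_condExp hm

end ConditionalExpectation

theorem div_sum_mul_sum_eq {ι : Type*} {s : Finset ι} {e b : ι → ℝ} {g : ι}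
    (h : ∀ i ∈ s, b g * e i = b i * e g) (hs : ∑ i ∈ s, e i ≠ 0) :
    e g / (∑ i ∈ s, e i) * ∑ i ∈ s, b i = b g := by
  rw [div_mul_eq_mul_div, div_eq_iff hs, Finset.mul_sum, Finset.mul_sum]
  exact Finset.sum_congr rfl fun i hi => by rw [h i hi, mul_comm]

theorem sum_indic_mul_eq {α : Type*} {Z : α → ℕ} {J : ℕ} {x : α} (hZ : Z x ∈ Finset.Icc 1 J)
    (F : ℕ → ℝ) : ∑ k ∈ Finset.Icc 1 J, indic Z k x * F k = F (Z x) := by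
  simp only [indic, ite_mul, one_mul, zero_mul]
  rw [Finset.sum_ite_eq, if_pos hZ]

theorem obs_mul_indic_eq {α : Type*} {Z : α → ℕ} {J : ℕ} {S Y : ℕ → α → ℝ}
    (hZ : ∀ x, Z x ∈ Finset.Icc 1 J) (z : ℕ) (x : α) :
    Yobs J Z Y x * Sobs J Z S x * indic Z z x = Y z x * S z x * indic Z z x := by
  rw [Yobs, Sobs, sum_indic_mul_eq (hZ x), sum_indic_mul_eq (hZ x)]
  by_cases h : Z x = z <;> simp [indic, h]

theorem integral_indic (P : Measure Ω) {Z : Ω → ℕ} (hZ : Measurable Z) (z : ℕ) :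
    ∫ ω, indic Z z ω ∂P = piZ P Z z := by
  have : indic Z z = (Z ⁻¹' {z}).indicator 1 := by
    ext ω
    by_cases h : Z ω = z <;> simp [indic, h]
  rw [this, integral_indicator_one (hZ (measurableSet_singleton z)), piZ, measureReal_def]
  rfl

theorem integral_indic_mul_of_indepFun {P : Measure Ω} {β : Type*} [MeasurableSpace β]
    {Z : Ω → ℕ} {W : Ω → β} {F : Ω → ℝ} (hind : IndepFun Z W P) (hZ : Measurable Z)
    (hW : Measurable W) (hF : Measurable[MeasurableSpace.comap W inferInstance] F) (z : ℕ) :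
    ∫ ω, indic Z z ω * F ω ∂P = piZ P Z z * ∫ ω, F ω ∂P := by
  have hI : Measurable[MeasurableSpace.comap Z inferInstance] (indic Z z) :=
    (measurable_from_nat (f := fun n => if n = z then (1 : ℝ) else 0)).comp (comap_measurable Z)
  have hIF : IndepFun (indic Z z) F P := by
    rw [IndepFun_iff_Indep] at hind ⊢
    exact indep_of_indep_of_le_left (indep_of_indep_of_le_right hind hF.comap_le) hI.comap_le
  rw [← integral_indic P hZ z]
  exact hIF.integral_mul_eq_mul_integral (hI.mono hZ.comap_le le_rfl).aestronglyMeasurable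
    (hF.mono hW.comap_le le_rfl).aestronglyMeasurable

theorem update_zero_or_one {α : Type*} {S : ℕ → α → ℝ} (hS01 : ∀ k x, S k x = 0 ∨ S k x = 1)
    (k : ℕ) (x : α) : Function.update S 0 0 k x = 0 ∨ Function.update S 0 0 k x = 1 := by
  rcases eq_or_ne k 0 with rfl | hk
  · simp
  · rw [Function.update_of_ne hk]
    exact hS01 k x

section PrincipalScores

variable {P : Measure Ω} {J : ℕ} {X : Ω → 𝒳} {S : ℕ → Ω → ℝ}

theorem measurable_update (hSm : ∀ k, Measurable (S k)) (k : ℕ) :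
    Measurable (Function.update S 0 0 k) := by
  rcases eq_or_ne k 0 with rfl | hk
  · rw [Function.update_self]
    exact measurable_zero
  · rw [Function.update_of_ne hk]
    exact hSm k

theorem pscore_eq_condExp_update {k : ℕ} (hk : k ≤ J) :
    pscore P X S J k = P[Function.update S 0 0 k | mX X] := by
  rcases Nat.eq_zero_or_pos k with rfl | hk0
  · rw [pscore, if_pos rfl, Function.update_self]
    exact (condExp_zero (E := ℝ)).symm
  · rw [pscore, if_neg hk0.ne', if_neg (by omega), Function.update_of_ne hk0.ne']

theorem stronglyMeasurable_pscore (k : ℕ) : StronglyMeasurable[mX X] (pscore P X S J k) := by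
  unfold pscore
  split_ifs
  · exact stronglyMeasurable_const
  · exact stronglyMeasurable_const
  · exact stronglyMeasurable_condExp

theorem pscore_mem_Icc [IsFiniteMeasure P] (hX : Measurable X) (hSm : ∀ k, Measurable (S k))
    (hS01 : ∀ k ω, S k ω = 0 ∨ S k ω = 1) {k : ℕ} (hk : k ≤ J) :
    ∀ᵐ ω ∂P, pscore P X S J k ω ∈ Set.Icc 0 1 := by
  rw [pscore_eq_condExp_update hk]
  exact condExp_mem_Icc_of_zero_or_one hX.comap_le (measurable_update hSm k)
    (update_zero_or_one hS01 k)

theorem condExp_mul_survival_ae_eq_sum (hSm : ∀ k, Measurable (S k))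
    (hS01 : ∀ k ω, S k ω = 0 ∨ S k ω = 1) (hmono : Monotonicity P J S) {f : Ω → ℝ}
    (hf : Integrable f P) {z : ℕ} (hz : z ∈ Finset.Icc 1 J) :
    P[fun ω => f ω * S z ω | mX X] =ᵐ[P]
      ∑ g ∈ Finset.Icc (J - z + 1) J, P[fun ω => f ω * indG J S g ω | mX X] := by
  refine condExp_ae_eq_sum_of_ae_eq_sum
    (fun g _ => integrable_mul_of_zero_or_one hf (measurable_indG hSm g) (indG_zero_or_one g)) ?_
  filter_upwards [survival_ae_eq_sum_indG hS01 hmono hz] with ω hω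
  rw [hω, Finset.sum_apply, Finset.sum_apply, Finset.mul_sum]

variable [IsFiniteMeasure P]

theorem eg_ae_eq_pscore_sub (hSm : ∀ k, Measurable (S k)) (hS01 : ∀ k ω, S k ω = 0 ∨ S k ω = 1)
    (hmono : Monotonicity P J S) {g : ℕ} (hg : g ∈ Finset.Icc 1 J) :
    eg P X J S g =ᵐ[P] pscore P X S J (J - g + 1) - pscore P X S J (J - g) := by
  obtain ⟨hg1, hgJ⟩ := Finset.mem_Icc.mp hg
  have hint : ∀ k, Integrable (Function.update S 0 0 k) P := fun k =>
    integrable_of_zero_or_one (measurable_update hSm k) (update_zero_or_one hS01 k)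
  rw [pscore_eq_condExp_update (by omega), pscore_eq_condExp_update (by omega)]
  exact (condExp_congr_ae (indG_ae_eq_sub hS01 hmono hg)).trans (condExp_sub (hint _) (hint _) _)

theorem pscore_ae_eq_sum_eg (hSm : ∀ k, Measurable (S k)) (hS01 : ∀ k ω, S k ω = 0 ∨ S k ω = 1)
    (hmono : Monotonicity P J S) {z : ℕ} (hz : z ∈ Finset.Icc 1 J) :
    pscore P X S J z =ᵐ[P] ∑ g ∈ Finset.Icc (J - z + 1) J, eg P X J S g := by
  obtain ⟨hz1, hzJ⟩ := Finset.mem_Icc.mp hz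
  rw [pscore_eq_condExp_update hzJ, Function.update_of_ne (by omega)]
  exact condExp_ae_eq_sum_of_ae_eq_sum
    (fun g _ => integrable_of_zero_or_one (measurable_indG hSm g) (indG_zero_or_one g))
    (survival_ae_eq_sum_indG hS01 hmono hz)

end PrincipalScores

def stratumWeight (P : Measure Ω) (X : Ω → 𝒳) (S : ℕ → Ω → ℝ) (J z g : ℕ) : Ω → ℝ :=
  fun ω => (pscore P X S J (J - g + 1) ω - pscore P X S J (J - g) ω) / pscore P X S J z ω

section Identification

variable {P : Measure Ω} {J : ℕ} {X : Ω → 𝒳} {Z : Ω → ℕ} {S Y : ℕ → Ω → ℝ}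

theorem measurable_stratumWeight (z g : ℕ) : Measurable[mX X] (stratumWeight P X S J z g) :=
  ((stronglyMeasurable_pscore _).measurable.sub (stronglyMeasurable_pscore _).measurable).div
    (stronglyMeasurable_pscore _).measurable

theorem norm_stratumWeight_le [IsFiniteMeasure P] (hX : Measurable X)
    (hSm : ∀ k, Measurable (S k)) (hS01 : ∀ k ω, S k ω = 0 ∨ S k ω = 1) {c : ℝ} (hc : 0 < c)
    {z g : ℕ} (hg : g ∈ Finset.Icc 1 J) (hpc : ∀ᵐ ω ∂P, c ≤ pscore P X S J z ω) :
    ∀ᵐ ω ∂P, ‖stratumWeight P X S J z g ω‖ ≤ 1 / c := by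
  obtain ⟨hg1, hgJ⟩ := Finset.mem_Icc.mp hg
  filter_upwards [pscore_mem_Icc hX hSm hS01 (show J - g + 1 ≤ J by omega),
    pscore_mem_Icc hX hSm hS01 (show J - g ≤ J by omega), hpc] with ω h₁ h₀ hc'
  have hnum : ‖pscore P X S J (J - g + 1) ω - pscore P X S J (J - g) ω‖ ≤ 1 := by
    rw [Real.norm_eq_abs, abs_sub_le_iff]
    constructor <;> linarith [h₁.1, h₁.2, h₀.1, h₀.2]
  rw [stratumWeight, norm_div]
  exact div_le_div₀ zero_le_one hnum hc (hc'.trans (Real.le_norm_self _))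

theorem stratumWeight_mul_condExp_ae_eq [IsFiniteMeasure P] (hSm : ∀ k, Measurable (S k))
    (hS01 : ∀ k ω, S k ω = 0 ∨ S k ω = 1) (hmono : Monotonicity P J S)
    (hPI : PrincipalIgnorability P J X S Y) {z g : ℕ} (hz : z ∈ Finset.Icc 1 J)
    (hg : g ∈ Finset.Icc (J - z + 1) J) (hpz : ∀ᵐ ω ∂P, pscore P X S J z ω ≠ 0)
    (hY : Integrable (Y z) P) :
    stratumWeight P X S J z g * P[fun ω => Y z ω * S z ω | mX X] =ᵐ[P]
      P[fun ω => Y z ω * indG J S g ω | mX X] := by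
  have hg' : g ∈ Finset.Icc 1 J := by
    simp only [Finset.mem_Icc] at hz hg ⊢
    omega
  filter_upwards [eg_ae_eq_pscore_sub (X := X) hSm hS01 hmono hg',
    pscore_ae_eq_sum_eg (X := X) hSm hS01 hmono hz,
    condExp_mul_survival_ae_eq_sum (X := X) hSm hS01 hmono hY hz,
    (Filter.eventually_all_finset _).2 (hPI z hz g hg), hpz] with ω he hp hb hPIω hpz
  rw [Finset.sum_apply] at hp hb
  rw [Pi.sub_apply] at he
  rw [hp] at hpz
  rw [Pi.mul_apply, stratumWeight, hb, ← he, hp]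
  exact div_sum_mul_sum_eq hPIω hpz

theorem integral_indic_mul_of_measurable_covariate (hX : Measurable X) (hZ : Measurable Z)
    (hSm : ∀ k, Measurable (S k)) (hYm : ∀ k, Measurable (Y k))
    (hind : IndepFun Z (fun ω => (X ω, fun k => S k ω, fun k => Y k ω)) P) {w : Ω → ℝ}
    (hw : Measurable[mX X] w) (z : ℕ) :
    ∫ ω, indic Z z ω * (w ω * (Y z ω * S z ω)) ∂P = piZ P Z z * ∫ ω, w ω * (Y z ω * S z ω) ∂P := by
  set W : Ω → 𝒳 × (ℕ → ℝ) × (ℕ → ℝ) := fun ω => (X ω, fun k => S k ω, fun k => Y k ω)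
  have hW : Measurable W :=
    hX.prodMk ((measurable_pi_lambda _ hSm).prodMk (measurable_pi_lambda _ hYm))
  have hWW : Measurable[MeasurableSpace.comap W inferInstance] W := comap_measurable W
  have hXW : mX X ≤ MeasurableSpace.comap W inferInstance := hWW.fst.comap_le
  exact integral_indic_mul_of_indepFun hind hZ hW ((hw.mono hXW le_rfl).mul
    (((measurable_pi_apply z).comp hWW.snd.snd).mul ((measurable_pi_apply z).comp hWW.snd.fst))) z

end Identification

/-- Under randomization, monotonicity, principal ignorability, and
positivity, for `z ∈ {1,…,J}` and `g ∈ {J−z+1,…,J}`: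
`π_z·E[Y_z·1(G=g)] = E[((p_{J−g+1}(X) − p_{J−g}(X))/p_z(X)) · Y·S·1(Z=z)]`.
Consequently, if `P(G=g) > 0`, the survivor average causal mean `E[Y_z | G=g]` equals the
displayed ratio. -/
theorem statement5 (P : Measure Ω) [IsProbabilityMeasure P] (J : ℕ)
    (X : Ω → 𝒳) (Z : Ω → ℕ) (S Y : ℕ → Ω → ℝ)
    (hset : Setup P J X Z S Y)
    (hrand : Randomization P J X Z S Y)
    (hmono : Monotonicity P J S)
    (hPI : PrincipalIgnorability P J X S Y)
    (hpos : Positivity P J X S) :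
    ∀ z ∈ Finset.Icc 1 J, ∀ g ∈ Finset.Icc (J - z + 1) J,
      (piZ P Z z * ∫ ω, Y z ω * indG J S g ω ∂P
        = ∫ ω, ((pscore P X S J (J - g + 1) ω - pscore P X S J (J - g) ω) / pscore P X S J z ω)
            * (Yobs J Z Y ω * Sobs J Z S ω * indic Z z ω) ∂P) ∧
      (0 < (P {ω | Gsum J S ω = (g : ℝ)}).toReal →
        (∫ ω, Y z ω * indG J S g ω ∂P) / (P {ω | Gsum J S ω = (g : ℝ)}).toReal
          = (∫ ω, ((pscore P X S J (J - g + 1) ω - pscore P X S J (J - g) ω)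
                / pscore P X S J z ω)
              * (Yobs J Z Y ω * Sobs J Z S ω * indic Z z ω) ∂P)
            / (piZ P Z z * (P {ω | Gsum J S ω = (g : ℝ)}).toReal)) := by
  obtain ⟨c, hc, hpc⟩ := hpos
  intro z hz g hg
  have hg' : g ∈ Finset.Icc 1 J := by
    simp only [Finset.mem_Icc] at hz hg ⊢
    omega
  have hYS : Integrable (fun ω => Y z ω * S z ω) P :=
    integrable_mul_of_zero_or_one (hset.hYint z) (hset.hSm z) (hset.hS01 z)
  have hwYS : Integrable (fun ω => stratumWeight P X S J z g ω * (Y z ω * S z ω)) P :=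
    hYS.bdd_mul ((measurable_stratumWeight z g).mono hset.hX.comap_le le_rfl).aestronglyMeasurable
      (norm_stratumWeight_le hset.hX hset.hSm hset.hS01 hc hg' (hpc z hz))
  have htower : ∫ ω, stratumWeight P X S J z g ω * (Y z ω * S z ω) ∂P
      = ∫ ω, Y z ω * indG J S g ω ∂P :=
    integral_mul_eq_of_mul_condExp_ae_eq hset.hX.comap_le
      (measurable_stratumWeight z g).stronglyMeasurable hwYS hYS
      (stratumWeight_mul_condExp_ae_eq hset.hSm hset.hS01 hmono hPI hz hg
        ((hpc z hz).mono fun ω h => (hc.trans_le h).ne') (hset.hYint z))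
  have hmain : piZ P Z z * ∫ ω, Y z ω * indG J S g ω ∂P
      = ∫ ω, stratumWeight P X S J z g ω * (Yobs J Z Y ω * Sobs J Z S ω * indic Z z ω) ∂P := by
    rw [← htower, ← integral_indic_mul_of_measurable_covariate hset.hX hset.hZ hset.hSm hset.hYm
      hrand.1 (measurable_stratumWeight z g)]
    congr 1 with ω
    rw [obs_mul_indic_eq hset.hZr]
    ring
  exact ⟨hmain, fun _ =>
    (mul_div_mul_left _ _ (hrand.2 z hz).ne').symm.trans (congrArg (· / _) hmain)⟩

end TruncationByDeath
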